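/- arXiv:0902.3289 — 5 statements merged into one kernel-verified Lean document; each statement's English description precedes it below -/
import Mathlib

section
/- Let R be an associative unital ring in which 2 is invertible. Let J₀, H ∈ R satisfy J₀² = −1, H·J₀ + J₀·H = 0, and assume 1 + H is a unit. Set J := (1 + H)·J₀·(1 + H)⁻¹. Then J² = −1, J + J₀ is a unit, and (J − J₀)·(J + J₀)⁻¹ = H. (This is the Abresch–Fischer chart for almost complex structures: the map H ↦ (1+H)J₀(1+H)⁻¹ from elements anticommuting with J₀ with 1+H invertible into the set {J : J² = −1} is injective, with inverse J ↦ (J − J₀)(J + J₀)⁻¹.) -/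
/-!
Conjugating `J₀` by the unit `1 + H` keeps `J² = -1`. Since `H` anticommutes with `J₀`,
`(1 + H) J₀ + J₀ (1 + H) = 2 J₀`, so `J + J₀ = 2 J₀ (1 + H)⁻¹` is a product of units, and
`(1 + H) J₀ - J₀ (1 + H) = H · 2 J₀`, so `J - J₀ = H (J + J₀)`; dividing by `J + J₀` recovers `H`.
-/

open Ring

section

variable {R : Type*} [Ring R]

theorem isUnit_of_sq_eq_neg_one {j : R} (hj : j ^ 2 = -1) : IsUnit j :=
  ⟨⟨j, -j, by rw [mul_neg, ← sq, hj, neg_neg], by rw [neg_mul, ← sq, hj, neg_neg]⟩, rfl⟩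

theorem conj_sq_eq_neg_one {u j : R} (hu : IsUnit u) (hj : j ^ 2 = -1) :
    (u * j * inverse u) ^ 2 = -1 := by
  obtain ⟨u, rfl⟩ := hu
  rw [inverse_unit, Units.conj_pow, hj, mul_neg_one, neg_mul, Units.mul_inv]

theorem conj_add_eq_mul_inverse {u j : R} (hu : IsUnit u) :
    u * j * inverse u + j = (u * j + j * u) * inverse u := by
  rw [add_mul, mul_inverse_cancel_right u j hu]

theorem conj_sub_eq_mul_inverse {u j : R} (hu : IsUnit u) :
    u * j * inverse u - j = (u * j - j * u) * inverse u := by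
  rw [sub_mul, mul_inverse_cancel_right u j hu]

variable {h j : R}

theorem one_add_mul_add_mul_one_add (hanti : h * j + j * h = 0) :
    (1 + h) * j + j * (1 + h) = 2 * j :=
  calc (1 + h) * j + j * (1 + h) = 2 * j + (h * j + j * h) := by noncomm_ring
    _ = 2 * j := by rw [hanti, add_zero]

theorem one_add_mul_sub_mul_one_add (hanti : h * j + j * h = 0) :
    (1 + h) * j - j * (1 + h) = h * (2 * j) :=
  calc (1 + h) * j - j * (1 + h) = h * (2 * j) - (h * j + j * h) := by noncomm_ring
    _ = h * (2 * j) := by rw [hanti, sub_zero]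

end

/-- **Abresch–Fischer chart.** In an associative unital ring `R` with `2` invertible, if
`J₀² = -1`, `H` anticommutes with `J₀` and `1 + H` is a unit, then
`J := (1 + H) * J₀ * (1 + H)⁻¹` satisfies `J² = -1`, `J + J₀` is a unit, and
`(J - J₀) * (J + J₀)⁻¹ = H`. -/
theorem abresch_fischer_chart {R : Type*} [Ring R] (h2 : IsUnit (2 : R))
    (J₀ H : R) (hJ₀ : J₀ ^ 2 = -1) (hanti : H * J₀ + J₀ * H = 0)
    (hH : IsUnit (1 + H)) :
    ((1 + H) * J₀ * Ring.inverse (1 + H)) ^ 2 = -1 ∧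
    IsUnit ((1 + H) * J₀ * Ring.inverse (1 + H) + J₀) ∧
    ((1 + H) * J₀ * Ring.inverse (1 + H) - J₀) *
        Ring.inverse ((1 + H) * J₀ * Ring.inverse (1 + H) + J₀) = H := by
  have hsum : (1 + H) * J₀ * inverse (1 + H) + J₀ = 2 * J₀ * inverse (1 + H) := by
    rw [conj_add_eq_mul_inverse hH, one_add_mul_add_mul_one_add hanti]
  have hdiff : (1 + H) * J₀ * inverse (1 + H) - J₀ =
      H * ((1 + H) * J₀ * inverse (1 + H) + J₀) := by
    rw [conj_sub_eq_mul_inverse hH, one_add_mul_sub_mul_one_add hanti, hsum, mul_assoc]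
  have hunit : IsUnit ((1 + H) * J₀ * inverse (1 + H) + J₀) := by
    rw [hsum]
    exact (h2.mul (isUnit_of_sq_eq_neg_one hJ₀)).mul hH.ringInverse
  refine ⟨conj_sq_eq_neg_one hH hJ₀, hunit, ?_⟩
  rw [hdiff, mul_assoc, mul_inverse_cancel _ hunit, mul_one]
end

section
/- Let R be an associative unital ring in which 2 is invertible, and let J₀, H, K ∈ R satisfy J₀² = −1, H·J₀ + J₀·H = 0, K·J₀ + J₀·K = 0, with 1 + H a unit. Set J := (1 + H)·J₀·(1 + H)⁻¹ (so J + J₀ = 2J₀(1+H)⁻¹ is a unit). Then (1 − H) · ( J · ( (K·J₀ − J·K) · (1 + H)⁻¹ ) ) · (J + J₀)⁻¹ = J₀·K. (In the paper's notation: with Dψ(H)K := (KJ₀ − JK)(1+H)⁻¹ the derivative of the Abresch–Fischer chart and Dψ⁻¹(J)L := (1−H)L(J+J₀)⁻¹ the derivative of its inverse, one has Dψ⁻¹(J)(J · Dψ(H)K) = J₀·K, i.e. the chart derivative intertwines left multiplication by J with left multiplication by J₀.) -/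
/-!
Write `u = 1 + H` and `J = u J₀ u⁻¹`. Since `H` anticommutes with `J₀`, `J₀ u = (1 - H) J₀`, whence
`J + J₀ = 2 J₀ u⁻¹` and `(1 - H) J = u J₀`. With `J² = -1` and `J₀ K J₀ = K` this gives
`(1 - H) J (K J₀ - J K) = u K + (1 - H) K = 2 K`, so the claim reduces to `2 K u⁻¹ = J₀ K · 2 J₀ u⁻¹`,
which is `J₀ K J₀ = K` once more.
-/

namespace AbreschFischer

variable {R : Type*} [Ring R]

theorem mul_one_add_of_anticomm {a H : R} (hH : H * a + a * H = 0) :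
    a * (1 + H) = (1 - H) * a := by
  rw [← sub_eq_zero, ← hH]
  noncomm_ring

theorem mul_mul_self_of_anticomm {J₀ K : R} (hJ₀ : J₀ ^ 2 = -1) (hK : K * J₀ + J₀ * K = 0) :
    J₀ * K * J₀ = K := by
  calc J₀ * K * J₀ = J₀ * (K * J₀ + J₀ * K) - J₀ ^ 2 * K := by noncomm_ring
    _ = K := by rw [hK, hJ₀]; noncomm_ring

noncomputable def chart (J₀ H : R) : R := (1 + H) * J₀ * Ring.inverse (1 + H)

variable {J₀ H : R}

theorem chart_sq (hJ₀ : J₀ ^ 2 = -1) (hu : IsUnit (1 + H)) : chart J₀ H ^ 2 = -1 := by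
  obtain ⟨u, hu⟩ := hu
  rw [chart, ← hu, Ring.inverse_unit, Units.conj_pow, hJ₀, mul_neg_one, neg_mul, Units.mul_inv]

theorem chart_add_self (hH : H * J₀ + J₀ * H = 0) (hu : IsUnit (1 + H)) :
    chart J₀ H + J₀ = 2 * J₀ * Ring.inverse (1 + H) := by
  calc chart J₀ H + J₀ = ((1 + H) * J₀ + J₀ * (1 + H)) * Ring.inverse (1 + H) := by
        rw [add_mul, chart, Ring.mul_inverse_cancel_right _ _ hu]
    _ = 2 * J₀ * Ring.inverse (1 + H) := by rw [mul_one_add_of_anticomm hH]; noncomm_ring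

theorem one_sub_mul_chart (hH : H * J₀ + J₀ * H = 0) (hu : IsUnit (1 + H)) :
    (1 - H) * chart J₀ H = (1 + H) * J₀ := by
  calc (1 - H) * chart J₀ H = (1 + H) * ((1 - H) * J₀) * Ring.inverse (1 + H) := by
        rw [chart]; noncomm_ring
    _ = (1 + H) * J₀ := by
        rw [← mul_one_add_of_anticomm hH, ← mul_assoc, Ring.mul_inverse_cancel_right _ _ hu]

theorem one_sub_mul_chart_mul_sub {K : R} (hJ₀ : J₀ ^ 2 = -1) (hH : H * J₀ + J₀ * H = 0)
    (hK : K * J₀ + J₀ * K = 0) (hu : IsUnit (1 + H)) :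
    (1 - H) * chart J₀ H * (K * J₀ - chart J₀ H * K) = 2 * K := by
  calc (1 - H) * chart J₀ H * (K * J₀ - chart J₀ H * K)
        = (1 - H) * chart J₀ H * K * J₀ - (1 - H) * chart J₀ H ^ 2 * K := by noncomm_ring
    _ = (1 + H) * (J₀ * K * J₀) + (1 - H) * K := by
        rw [one_sub_mul_chart hH hu, chart_sq hJ₀ hu]; noncomm_ring
    _ = 2 * K := by rw [mul_mul_self_of_anticomm hJ₀ hK]; noncomm_ring

end AbreschFischer

open AbreschFischer in
/-- The computational core of the holomorphy of the Abresch–Fischer charts: with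
`J := (1 + H) * J₀ * (1 + H)⁻¹`, `Dψ(H)K = (K*J₀ - J*K) * (1 + H)⁻¹` and
`Dψ⁻¹(J)L = (1 - H) * L * (J + J₀)⁻¹`, one has `Dψ⁻¹(J)(J · Dψ(H)K) = J₀ * K`. -/
theorem abresch_fischer_holomorphic {R : Type*} [Ring R] (h2 : IsUnit (2 : R))
    (J₀ H Kt : R) (hJ₀ : J₀ ^ 2 = -1) (hH : H * J₀ + J₀ * H = 0)
    (hK : Kt * J₀ + J₀ * Kt = 0) (hu : IsUnit (1 + H)) :
    (1 - H) *
        (((1 + H) * J₀ * Ring.inverse (1 + H)) *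
          ((Kt * J₀ - ((1 + H) * J₀ * Ring.inverse (1 + H)) * Kt) * Ring.inverse (1 + H))) *
        Ring.inverse (((1 + H) * J₀ * Ring.inverse (1 + H)) + J₀) = J₀ * Kt := by
  change (1 - H) * (chart J₀ H * ((Kt * J₀ - chart J₀ H * Kt) * Ring.inverse (1 + H))) *
    Ring.inverse (chart J₀ H + J₀) = J₀ * Kt
  have hJ₀_unit : IsUnit J₀ := (isUnit_pow_iff two_ne_zero).mp (hJ₀ ▸ isUnit_one.neg)
  have hsum_unit : IsUnit (chart J₀ H + J₀) := by
    rw [chart_add_self hH hu]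
    exact (h2.mul hJ₀_unit).mul hu.ringInverse
  refine ((Ring.eq_mul_inverse_iff_mul_eq _ _ _ hsum_unit).2 ?_).symm
  calc J₀ * Kt * (chart J₀ H + J₀) = 2 * (J₀ * Kt * J₀) * Ring.inverse (1 + H) := by
        rw [chart_add_self hH hu]; noncomm_ring
    _ = (1 - H) * chart J₀ H * (Kt * J₀ - chart J₀ H * Kt) * Ring.inverse (1 + H) := by
        rw [mul_mul_self_of_anticomm hJ₀ hK, one_sub_mul_chart_mul_sub hJ₀ hH hK hu]
    _ = _ := by simp only [mul_assoc]
end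

section
/- Let R be a commutative ring, A an associative R-algebra, and d₁, …, dₙ R-linear derivations of A. For a permutation σ of {1, …, n} write D_σ := d_{σ(1)} ∘ ⋯ ∘ d_{σ(n)} (composition of R-linear endomorphisms of A), and for a subset S ⊆ {1, …, n} write Σ_S(f) := Σ over all bijections e : {1, …, |S|} → S of (d_{e(1)} ∘ ⋯ ∘ d_{e(|S|)})(f), with Σ_∅(f) = f. Then for all f, g ∈ A: Σ_{σ ∈ Sₙ} D_σ(f·g) = Σ_{S ⊆ {1, …, n}} binom(n, |S|) · Σ_S(f) · Σ_{Sᶜ}(g). Equivalently, if A is a ℚ-algebra and 𝔖(d_{i_1}, …, d_{i_k}) := (1/k!) Σ over all orderings of the composite denotes symmetrization, then 𝔖(d₁, …, dₙ)(f·g) = Σ_{S ⊆ {1, …, n}} 𝔖(d_S)(f) · 𝔖(d_{Sᶜ})(g). -/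
/-!
Let `Σ_T` be the sum, over all orderings of `T`, of the composites of the `d_k` with `k ∈ T`.
Splitting off the first factor gives `Σ_T = ∑_{k ∈ T} d_k ∘ Σ_{T ∖ {k}}`. By induction on `T`,
expand `Σ_{T ∖ {k}} (f g)` and apply the Leibniz rule of `d_k`. With `|T| = m + 1`, a term
`Σ_S f · Σ_{T ∖ S} g` then arises once from each `k ∈ S`, with coefficient `C(m, |S| - 1)`, and
once from each `k ∉ S`, with coefficient `C(m, |S|)`. By Pascal's rule these add up to
`C(m + 1, |S|)`.
-/

open Finset

namespace Finset
variable {ι : Type*}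

def orderings (T : Finset ι) : Finset (List ι) := ⟨T.val.lists, Multiset.lists_nodup_finset T⟩

@[simp]
theorem mem_orderings {T : Finset ι} {l : List ι} : l ∈ T.orderings ↔ T.val = l :=
  Multiset.mem_lists_iff _ _

@[simp]
theorem orderings_empty : (∅ : Finset ι).orderings = {[]} := by
  ext l
  simp [eq_comm]

theorem card_orderings (T : Finset ι) : T.orderings.card = T.card.factorial := by
  change (T.val.lists).card = _
  rw [← T.coe_toList, Multiset.lists_coe, Multiset.coe_card, List.length_permutations,
    length_toList]

theorem sum_orderings_eq_sum_cons [DecidableEq ι] {M : Type*} [AddCommMonoid M]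
    {T : Finset ι} (hT : T.Nonempty) (F : List ι → M) :
    ∑ l ∈ T.orderings, F l = ∑ k ∈ T, ∑ l ∈ (T.erase k).orderings, F (k :: l) := by
  have hcons : T.orderings = T.biUnion fun k =>
      (T.erase k).orderings.map ⟨List.cons k, List.cons_injective⟩ := by
    ext (_ | ⟨k, l⟩)
    · simpa using hT.ne_empty
    · simp only [mem_orderings, mem_biUnion, mem_map, Function.Embedding.coeFn_mk,
        List.cons.injEq, ← Multiset.cons_coe]
      constructor
      · intro h
        exact ⟨k, by simp [← mem_val, h], l, by simp [erase_val, h], rfl, rfl⟩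
      · rintro ⟨k, hk, l, hl, rfl, rfl⟩
        rw [← hl, erase_val, Multiset.cons_erase hk]
  rw [hcons, sum_biUnion]
  · simp only [sum_map, Function.Embedding.coeFn_mk]
  · intro k _ k' _ hkk'
    simp only [Function.onFun, disjoint_left, mem_map]
    rintro _ ⟨l, _, rfl⟩ ⟨l', _, h⟩
    exact hkk' (List.cons.inj h).1.symm

theorem sum_equiv_fin_eq_sum_orderings {α M : Type*} [Fintype α] [DecidableEq α]
    [AddCommMonoid M] (v : α ↪ ι) {k : ℕ} (hk : Fintype.card α = k) (F : List ι → M) :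
    ∑ e : Fin k ≃ α, F (List.ofFn fun j => v (e j)) = ∑ l ∈ (univ.map v).orderings, F l := by
  classical
  subst hk
  have hinj : Function.Injective fun e : Fin (Fintype.card α) ≃ α => List.ofFn fun j => v (e j) :=
    fun e e' h => Equiv.ext fun j => v.injective (congrFun (List.ofFn_injective h) j)
  rw [← sum_image fun e _ e' _ h => hinj h]
  congr 1
  refine eq_of_subset_of_card_le ?_ ?_
  · simp only [subset_iff, mem_image, mem_univ, true_and, mem_orderings]
    rintro _ ⟨e, rfl⟩
    refine (Multiset.Nodup.ext (univ.map v).nodup ?_).2 fun x => ?_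
    · exact List.nodup_ofFn.2 (v.injective.comp e.injective)
    · simp [e.surjective.exists]
  · rw [card_orderings, card_image_of_injective _ hinj, card_map, card_univ, card_univ,
      Fintype.card_equiv (Fintype.equivFin α).symm, Fintype.card_fin]

section DoubleCounting
variable [DecidableEq ι] {M : Type*} [AddCommMonoid M]

theorem sum_sum_powerset_erase_eq_sum_sum_sdiff (T : Finset ι) (F : ι → Finset ι → M) :
    ∑ k ∈ T, ∑ S ∈ (T.erase k).powerset, F k S = ∑ S ∈ T.powerset, ∑ k ∈ T \ S, F k S :=
  sum_comm' fun k S => by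
    simp only [mem_powerset, subset_erase, mem_sdiff]
    tauto

theorem sum_sum_powerset_erase_eq_sum_sum_erase (T : Finset ι) (F : ι → Finset ι → M) :
    ∑ k ∈ T, ∑ S ∈ (T.erase k).powerset, F k S = ∑ S ∈ T.powerset, ∑ k ∈ S, F k (S.erase k) := by
  rw [sum_sigma', sum_sigma']
  refine sum_nbij' (fun x => ⟨insert x.1 x.2, x.1⟩) (fun y => ⟨y.2, y.1.erase y.2⟩)
    ?_ ?_ ?_ ?_ ?_
  · simp only [mem_sigma, mem_powerset, subset_erase, mem_insert_self, and_true]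
    rintro ⟨k, S⟩ ⟨hk, hS, -⟩
    exact insert_subset hk hS
  · simp only [mem_sigma, mem_powerset, subset_erase, notMem_erase, not_false_eq_true, and_true]
    rintro ⟨S, k⟩ ⟨hS, hk⟩
    exact ⟨hS hk, (erase_subset k S).trans hS⟩
  · simp only [mem_sigma, mem_powerset, subset_erase]
    rintro ⟨k, S⟩ ⟨-, -, hk⟩
    simp [erase_insert hk]
  · simp only [mem_sigma]
    rintro ⟨S, k⟩ ⟨-, hk⟩
    simp [insert_erase hk]
  · simp only [mem_sigma, mem_powerset, subset_erase]
    rintro ⟨k, S⟩ ⟨-, -, hk⟩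
    simp [erase_insert hk]

end DoubleCounting
end Finset

section SymmetrizedProd
variable {ι M : Type*} [Semiring M] (d : ι → M)

def symmetrizedProd (T : Finset ι) : M := ∑ l ∈ T.orderings, (l.map d).prod

@[simp]
theorem symmetrizedProd_empty : symmetrizedProd d ∅ = 1 := by
  simp [symmetrizedProd]

theorem symmetrizedProd_eq_sum_mul [DecidableEq ι] {T : Finset ι} (hT : T.Nonempty) :
    symmetrizedProd d T = ∑ k ∈ T, d k * symmetrizedProd d (T.erase k) := by
  simp only [symmetrizedProd, sum_orderings_eq_sum_cons hT, List.map_cons, List.prod_cons,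
    mul_sum]

theorem symmetrizedProd_eq_sum_equiv [DecidableEq ι] (T : Finset ι) :
    symmetrizedProd d T = ∑ e : Fin T.card ≃ T, (List.ofFn fun j => d (e j)).prod := by
  have h := sum_equiv_fin_eq_sum_orderings (Function.Embedding.subtype (· ∈ T))
    (Fintype.card_coe T) fun l => (l.map d).prod
  rw [univ_eq_attach, attach_map_val] at h
  simp only [symmetrizedProd, ← h, List.map_ofFn]
  rfl

theorem symmetrizedProd_univ_eq_sum_perm {n : ℕ} (d : Fin n → M) :
    symmetrizedProd d univ = ∑ σ : Equiv.Perm (Fin n), (List.ofFn fun i => d (σ i)).prod := by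
  rw [symmetrizedProd, ← map_refl (s := univ),
    ← sum_equiv_fin_eq_sum_orderings _ (Fintype.card_fin n)]
  simp only [List.map_ofFn]
  rfl

end SymmetrizedProd

section Leibniz
variable {ι R A : Type*} [DecidableEq ι] [Semiring R] [NonUnitalNonAssocSemiring A] [Module R A]
  (d : ι → Module.End R A)

theorem symmetrizedProd_apply_eq_sum {T : Finset ι} (hT : T.Nonempty) (x : A) :
    symmetrizedProd d T x = ∑ k ∈ T, d k (symmetrizedProd d (T.erase k) x) := by
  rw [symmetrizedProd_eq_sum_mul d hT, LinearMap.sum_apply]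
  rfl

theorem symmetrizedProd_pascal_step {S T : Finset ι} {m : ℕ} (hST : S ⊆ T)
    (hT : T.card = m + 1) (f g : A) :
    ∑ k ∈ S, m.choose (S.erase k).card •
        (d k (symmetrizedProd d (S.erase k) f) * symmetrizedProd d (T \ S) g) +
      ∑ k ∈ T \ S, m.choose S.card •
        (symmetrizedProd d S f * d k (symmetrizedProd d ((T \ S).erase k) g)) =
      (m + 1).choose S.card • (symmetrizedProd d S f * symmetrizedProd d (T \ S) g) := by
  have hT0 : T.Nonempty := card_pos.1 (by omega)
  rcases S.eq_empty_or_nonempty with rfl | hS0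
  · simp [← mul_sum, ← symmetrizedProd_apply_eq_sum d hT0]
  obtain ⟨c, hc⟩ : ∃ c, S.card = c + 1 := Nat.exists_eq_add_one.2 hS0.card_pos
  have hleft : ∑ k ∈ S, m.choose (S.erase k).card •
      (d k (symmetrizedProd d (S.erase k) f) * symmetrizedProd d (T \ S) g) =
      m.choose c • (symmetrizedProd d S f * symmetrizedProd d (T \ S) g) := by
    rw [sum_congr rfl fun k hk => by rw [card_erase_of_mem hk, hc, Nat.add_sub_cancel],
      ← smul_sum, ← sum_mul, ← symmetrizedProd_apply_eq_sum d hS0]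
  rw [hleft, hc]
  rcases (T \ S).eq_empty_or_nonempty with hTS | hTS
  · have hcm : c = m := by
      have := card_sdiff_add_card_eq_card hST
      rw [hTS, card_empty] at this
      omega
    simp [hTS, hcm]
  · rw [← smul_sum, ← mul_sum, ← symmetrizedProd_apply_eq_sum d hTS, ← add_nsmul,
      Nat.choose_succ_succ']

theorem symmetrizedProd_apply_mul (hd : ∀ i, ∀ a b : A, d i (a * b) = d i a * b + a * d i b)
    (T : Finset ι) (f g : A) :
    symmetrizedProd d T (f * g) = ∑ S ∈ T.powerset,
      T.card.choose S.card • (symmetrizedProd d S f * symmetrizedProd d (T \ S) g) := by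
  induction T using Finset.strongInduction with
  | H T ih =>
  rcases T.eq_empty_or_nonempty with rfl | hT
  · simp
  obtain ⟨m, hm⟩ : ∃ m, T.card = m + 1 := Nat.exists_eq_add_one.2 hT.card_pos
  calc symmetrizedProd d T (f * g)
      = ∑ k ∈ T, ∑ S ∈ (T.erase k).powerset, m.choose S.card •
          (d k (symmetrizedProd d S f) * symmetrizedProd d (T.erase k \ S) g +
            symmetrizedProd d S f * d k (symmetrizedProd d (T.erase k \ S) g)) := by
        rw [symmetrizedProd_apply_eq_sum d hT]
        refine sum_congr rfl fun k hk => ?_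
        rw [ih _ (erase_ssubset hk), card_erase_of_mem hk, hm, Nat.add_sub_cancel, map_sum]
        simp only [map_nsmul, hd]
    _ = ∑ S ∈ T.powerset, (∑ k ∈ S, m.choose (S.erase k).card •
          (d k (symmetrizedProd d (S.erase k) f) * symmetrizedProd d (T \ S) g) +
        ∑ k ∈ T \ S, m.choose S.card •
          (symmetrizedProd d S f * d k (symmetrizedProd d ((T \ S).erase k) g))) := by
        simp only [smul_add, sum_add_distrib]
        congr 1
        · rw [sum_sum_powerset_erase_eq_sum_sum_erase]
          refine sum_congr rfl fun S _ => sum_congr rfl fun k hk => ?_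
          rw [← erase_sdiff_distrib, erase_eq_of_notMem (notMem_sdiff_of_mem_right hk)]
        · simp only [sum_sum_powerset_erase_eq_sum_sum_sdiff, erase_sdiff_comm]
    _ = _ := sum_congr rfl fun S hS =>
        hm ▸ symmetrizedProd_pascal_step d (mem_powerset.1 hS) hm f g

end Leibniz

/-- **Symmetrized Leibniz rule.** Let `d₁, …, dₙ` be `R`-linear derivations of an associative
`R`-algebra `A`. Summing the composites `d_{σ(1)} ∘ ⋯ ∘ d_{σ(n)}` applied to `f * g` over all
permutations `σ` gives `∑_{S ⊆ {1,…,n}} (n choose |S|) • Σ_S(f) * Σ_{Sᶜ}(g)`, where `Σ_S(f)`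
is the sum over all orderings `e` of `S` of `(d_{e(1)} ∘ ⋯ ∘ d_{e(|S|)})(f)`. -/
theorem symmetrized_leibniz {R A : Type*} [CommRing R] [Ring A] [Algebra R A]
    (n : ℕ) (d : Fin n → Module.End R A)
    (hd : ∀ i, ∀ a b : A, d i (a * b) = d i a * b + a * d i b) (f g : A) :
    ∑ σ : Equiv.Perm (Fin n), (List.ofFn fun i => d (σ i)).prod (f * g) =
      ∑ S : Finset (Fin n), (n.choose S.card) •
        ((∑ e : Fin S.card ≃ {x // x ∈ S}, (List.ofFn fun j => d (e j).val).prod f) *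
         (∑ e : Fin Sᶜ.card ≃ {x // x ∈ Sᶜ}, (List.ofFn fun j => d (e j).val).prod g)) := by
  rw [← LinearMap.sum_apply, ← symmetrizedProd_univ_eq_sum_perm, symmetrizedProd_apply_mul d hd,
    powerset_univ, card_univ, Fintype.card_fin]
  refine sum_congr rfl fun S _ => ?_
  rw [← compl_eq_univ_sdiff, symmetrizedProd_eq_sum_equiv, symmetrizedProd_eq_sum_equiv,
    LinearMap.sum_apply, LinearMap.sum_apply]
end

section
/- Let K be the field ℝ or ℂ, and let (A, μ) and (A', μ') be K-superalgebras, i.e. ℤ/2-graded K-vector spaces equipped with even K-bilinear multiplications μ : A × A → A and μ' : A' × A' → A'. For each finite-dimensional Grassmann algebra Λ, let μ̄_Λ denote the induced Λ₀-bilinear multiplication on Ā(Λ) := (Λ ⊗ A)₀ determined by μ̄_Λ(λ₁ ⊗ a₁, λ₂ ⊗ a₂) = (λ₂·λ₁) ⊗ μ(a₁, a₂), and similarly μ̄'_Λ on Ā'(Λ). For an even K-linear map f : A → A', let f̄_Λ : Ā(Λ) → Ā'(Λ) be the restriction of id_Λ ⊗ f. Then f is an algebra homomorphism (f(μ(a,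 b)) = μ'(f(a), f(b)) for all a, b ∈ A) if and only if for every finite-dimensional Grassmann algebra Λ the map f̄_Λ is multiplicative: f̄_Λ(μ̄_Λ(x, y)) = μ̄'_Λ(f̄_Λ(x), f̄_Λ(y)) for all x, y ∈ Ā(Λ). -/
/-!
On pure tensors `λ₁ ⊗ a`, `λ₂ ⊗ b` the Grassmann-point identity reads
`(λ₂ λ₁) ⊗ f (μ a b) = (λ₂ λ₁) ⊗ μ' (f a) (f b)`. Hence multiplicativity of `f` gives it on all of
`Λ ⊗ A` by bilinearity. Conversely, for homogeneous `a`, `b` of parities `p`, `q` one picks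
`λ₁ ∈ {1, θ₀}` and `λ₂ ∈ {1, θ₁}` in `Λ₂` of these parities; then `λ₂ λ₁ ≠ 0` since `θ₁ θ₀ ≠ 0`,
so over the field `K` this factor cancels, and the grading of `A` extends the identity to all
`a`, `b`.
-/

open TensorProduct

namespace SuperAlgebraHom

variable (K : Type) [RCLike K]

/-- The Grassmann algebra `Λₘ` on `m` generators over `K`. -/
abbrev Grass (m : ℕ) : Type :=
  ExteriorAlgebra K (Fin m → K)

/-- The `ℤ/2`-grading of the Grassmann algebra `Λₘ` into its even and odd part. -/
noncomputable def grassGrading (m : ℕ) (p : ZMod 2) : Submodule K (Grass K m) :=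
  CliffordAlgebra.evenOdd (0 : QuadraticForm K (Fin m → K)) p

/-- For a `ℤ/2`-graded `K`-vector space `V` (given by its grading `gr`) and the Grassmann
algebra `Λₘ`, the even part `V̄(Λₘ) = Λ₀ ⊗ V₀ ⊕ Λ₁ ⊗ V₁` of `Λₘ ⊗ V`. -/
noncomputable def bar (m : ℕ) {V : Type} [AddCommGroup V] [Module K V]
    (gr : ZMod 2 → Submodule K V) : Submodule K (Grass K m ⊗[K] V) :=
  ⨆ p : ZMod 2, Submodule.span K
    {x | ∃ a ∈ grassGrading K m p, ∃ v ∈ gr p, x = a ⊗ₜ[K] v}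

/-- For a `K`-superalgebra `(A, μ)`, the induced `Λ₀`-bilinear multiplication `μ̄_Λ` on
`Λ ⊗ A`, determined by `μ̄_Λ(λ₁ ⊗ a₁, λ₂ ⊗ a₂) = (λ₂·λ₁) ⊗ μ(a₁, a₂)`. -/
noncomputable def barMul (m : ℕ) {A : Type} [AddCommGroup A] [Module K A]
    (μ : A →ₗ[K] A →ₗ[K] A) :
    Grass K m ⊗[K] A →ₗ[K] Grass K m ⊗[K] A →ₗ[K] Grass K m ⊗[K] A :=
  TensorProduct.map₂ ((LinearMap.mul K (Grass K m)).flip) μ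

theorem _root_.TensorProduct.tmul_right_injective_of_ne_zero {F V W : Type*} [Field F]
    [AddCommGroup V] [Module F V] [AddCommGroup W] [Module F W] {c : V} (hc : c ≠ 0) :
    Function.Injective (c ⊗ₜ[F] · : W → V ⊗[F] W) := by
  obtain ⟨φ, hφ⟩ := Module.Projective.exists_dual_eq_one F hc
  intro u w h
  simpa [hφ] using congrArg (TensorProduct.lid F W ∘ LinearMap.rTensor W φ) h

open ExteriorAlgebra in
theorem _root_.ExteriorAlgebra.ι_single_one_mul_ι_single_zero_ne_zero (R : Type*) [CommRing R]
    [Nontrivial R] :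
    ι R (Pi.single 1 1 : Fin 2 → R) * ι R (Pi.single 0 1) ≠ 0 := by
  intro h
  have hιMulti : ιMulti R 2 ![(Pi.single 1 1 : Fin 2 → R), Pi.single 0 1] = 0 := by
    simpa [ιMulti_apply, List.ofFn_succ] using h
  -- the determinant in degree 2, extended by zero to the other degrees, is a linear form on `⋀ R²`
  let det : ∀ i : ℕ, (Fin 2 → R) [⋀^Fin i]→ₗ[R] R
    | 2 => Matrix.detRowAlternating
    | _ => 0
  have hdet : (Matrix.of ![(Pi.single 1 1 : Fin 2 → R), Pi.single 0 1]).det = 0 := by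
    rw [← map_zero (liftAlternating det), ← hιMulti, liftAlternating_apply_ιMulti]
    rfl
  simp [Matrix.det_fin_two] at hdet

theorem _root_.DirectSum.Decomposition.bilinear_ext {R ι M N : Type*} [CommSemiring R]
    [AddCommMonoid M] [Module R M] [AddCommMonoid N] [Module R N] [DecidableEq ι]
    (gr : ι → Submodule R M) [DirectSum.Decomposition gr] {B₁ B₂ : M →ₗ[R] M →ₗ[R] N}
    (h : ∀ i j, ∀ a ∈ gr i, ∀ b ∈ gr j, B₁ a b = B₂ a b) : B₁ = B₂ := by
  ext a b
  induction a using DirectSum.Decomposition.inductionOn gr with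
  | zero => simp
  | add a a' ha ha' => simp [ha, ha']
  | homogeneous a =>
    induction b using DirectSum.Decomposition.inductionOn gr with
    | zero => simp
    | add b b' hb hb' => simp [hb, hb']
    | homogeneous b => exact h _ _ a a.2 b b.2

section

variable {m : ℕ} {A A' : Type} [AddCommGroup A] [Module K A] [AddCommGroup A'] [Module K A']
  {μ : A →ₗ[K] A →ₗ[K] A} {μ' : A' →ₗ[K] A' →ₗ[K] A'} {f : A →ₗ[K] A'}

@[simp]
theorem barMul_tmul (l₁ l₂ : Grass K m) (a b : A) :
    barMul K m μ (l₁ ⊗ₜ a) (l₂ ⊗ₜ b) = (l₂ * l₁) ⊗ₜ μ a b :=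
  rfl

theorem tmul_mem_bar {gr : ZMod 2 → Submodule K A} {p : ZMod 2} {l : Grass K m}
    (hl : l ∈ grassGrading K m p) {a : A} (ha : a ∈ gr p) : l ⊗ₜ[K] a ∈ bar K m gr :=
  Submodule.mem_iSup_of_mem p (Submodule.subset_span ⟨l, hl, a, ha, rfl⟩)

theorem map_barMul (h : ∀ a b, f (μ a b) = μ' (f a) (f b)) (x y : Grass K m ⊗[K] A) :
    map LinearMap.id f (barMul K m μ x y) =
      barMul K m μ' (map LinearMap.id f x) (map LinearMap.id f y) := by
  suffices (barMul K m μ).compr₂ (map LinearMap.id f) =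
      (barMul K m μ').compl₁₂ (map LinearMap.id f) (map LinearMap.id f) from
    LinearMap.congr_fun₂ this x y
  ext l₁ a l₂ b
  simp [h]

theorem exists_mem_grassGrading_mul_ne_zero (p q : ZMod 2) :
    ∃ l₁ ∈ grassGrading K 2 p, ∃ l₂ ∈ grassGrading K 2 q, l₂ * l₁ ≠ 0 := by
  have hone : (1 : Grass K 2) ∈ grassGrading K 2 0 :=
    Submodule.one_le.mp (CliffordAlgebra.one_le_evenOdd_zero _)
  have hι (v : Fin 2 → K) : ExteriorAlgebra.ι K v ∈ grassGrading K 2 1 :=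
    CliffordAlgebra.ι_mem_evenOdd_one _ v
  fin_cases p <;> fin_cases q
  · exact ⟨1, hone, 1, hone, by simp⟩
  · exact ⟨1, hone, _, hι (Pi.single 1 1), by simp⟩
  · exact ⟨_, hι (Pi.single 0 1), 1, hone, by simp⟩
  · exact ⟨_, hι _, _, hι _, ExteriorAlgebra.ι_single_one_mul_ι_single_zero_ne_zero K⟩

theorem map_mul_of_map_barMul {gr : ZMod 2 → Submodule K A}
    (h : ∀ x ∈ bar K 2 gr, ∀ y ∈ bar K 2 gr, map LinearMap.id f (barMul K 2 μ x y) =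
      barMul K 2 μ' (map LinearMap.id f x) (map LinearMap.id f y))
    {p q : ZMod 2} {a b : A} (ha : a ∈ gr p) (hb : b ∈ gr q) :
    f (μ a b) = μ' (f a) (f b) := by
  obtain ⟨l₁, hl₁, l₂, hl₂, hne⟩ := exists_mem_grassGrading_mul_ne_zero K p q
  have hab := h _ (tmul_mem_bar K hl₁ ha) _ (tmul_mem_bar K hl₂ hb)
  simp only [barMul_tmul, map_tmul, LinearMap.id_apply] at hab
  exact TensorProduct.tmul_right_injective_of_ne_zero hne hab

end

variable {A A' : Type} [AddCommGroup A] [Module K A] [AddCommGroup A'] [Module K A']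
  (grA : ZMod 2 → Submodule K A) (grA' : ZMod 2 → Submodule K A')
  [DirectSum.Decomposition grA] [DirectSum.Decomposition grA']

theorem algHom_iff_barMultiplicative
    (μ : A →ₗ[K] A →ₗ[K] A) (μ' : A' →ₗ[K] A' →ₗ[K] A')
    (f : A →ₗ[K] A') :
    (∀ a b : A, f (μ a b) = μ' (f a) (f b)) ↔
      ∀ m : ℕ, ∀ x ∈ bar K m grA, ∀ y ∈ bar K m grA,
        TensorProduct.map LinearMap.id f (barMul K m μ x y) =
          barMul K m μ' (TensorProduct.map LinearMap.id f x)
            (TensorProduct.map LinearMap.id f y) := by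
  refine ⟨fun h m x _ y _ => map_barMul K h x y, fun h a b => ?_⟩
  refine LinearMap.congr_fun₂ (DirectSum.Decomposition.bilinear_ext grA
    (B₁ := μ.compr₂ f) (B₂ := μ'.compl₁₂ f f) fun p q a ha b hb => ?_) a b
  exact map_mul_of_map_barMul K (h 2) ha hb

end SuperAlgebraHom
end

section
/- Let K be a field, n ∈ ℕ, and let ε : Λₙ → K be the augmentation of the Grassmann algebra Λₙ on n generators (the unique K-algebra homomorphism sending every generator θᵢ to 0; in Lean: ExteriorAlgebra.algebraMapInv). Then an element x ∈ Λₙ is a unit if and only if ε(x) ≠ 0. -/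
/-!
Write `x = ε(x) + y` with `y` in the span of the exterior powers `⋀^i M`, `i ≥ 1`. Multiplication adds
degrees and `⋀^d M = 0` once `d` exceeds the number of generators of `M`, so `y` is nilpotent; since
`ε(x)` is central, `x` is a unit as soon as `ε(x)` is.
-/

namespace ExteriorAlgebra

variable {R M : Type*} [CommRing R] [AddCommGroup M] [Module R M]

lemma exteriorPower_eq_bot_of_card_lt {ι : Type*} [Fintype ι] [LinearOrder ι] {v : ι → M}
    (hv : Submodule.span R (Set.range v) = ⊤) {k : ℕ} (hk : Fintype.card ι < k) :
    ⋀[R]^k M = ⊥ := by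
  have : IsEmpty (Set.powersetCard ι k) :=
    ⟨fun s => hk.not_ge (Set.powersetCard.card_eq s ▸ Finset.card_le_univ _)⟩
  rw [← exteriorPower.ιMulti_family_span_fixedDegree_of_span R hv, Set.range_eq_empty,
    Submodule.span_empty]

lemma exists_exteriorPower_eq_bot [Module.Finite R M] : ∃ d, ⋀[R]^d M = ⊥ := by
  obtain ⟨d, v, hv⟩ := Module.Finite.exists_fin (R := R) (M := M)
  exact ⟨d + 1, exteriorPower_eq_bot_of_card_lt hv (by simp)⟩

variable (R M) in
def degreeFiltration (k : ℕ) : Submodule R (ExteriorAlgebra R M) :=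
  ⨆ i, ⋀[R]^(k + i) M

lemma degreeFiltration_zero : degreeFiltration R M 0 = ⊤ := by
  simpa [degreeFiltration] using
    (DirectSum.Decomposition.isInternal (fun i : ℕ => ⋀[R]^i M)).submodule_iSup_eq_top

lemma degreeFiltration_mul_le (a b : ℕ) :
    degreeFiltration R M a * degreeFiltration R M b ≤ degreeFiltration R M (a + b) := by
  simp only [degreeFiltration, Submodule.iSup_mul, Submodule.mul_iSup, iSup_le_iff]
  intro i j
  rw [← pow_add]
  refine le_iSup_of_le (i + j) (le_of_eq ?_)
  congr 1
  omega

lemma degreeFiltration_eq_bot {d : ℕ} (hd : ⋀[R]^d M = ⊥) : degreeFiltration R M d = ⊥ := by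
  simp [degreeFiltration, pow_add, hd]

lemma pow_mem_degreeFiltration {t : ExteriorAlgebra R M} (ht : t ∈ degreeFiltration R M 1)
    (k : ℕ) : t ^ k ∈ degreeFiltration R M k := by
  induction k with
  | zero => simp [degreeFiltration_zero]
  | succ k ih => exact pow_succ t k ▸ degreeFiltration_mul_le k 1 (Submodule.mul_mem_mul ih ht)

lemma sub_algebraMap_algebraMapInv_mem (x : ExteriorAlgebra R M) :
    x - algebraMap R _ (algebraMapInv x) ∈ degreeFiltration R M 1 := by
  induction x using ExteriorAlgebra.induction with
  | algebraMap r => simp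
  | ι m =>
    have hε : algebraMapInv (ι R m) = 0 := by simp [algebraMapInv]
    rw [hε, map_zero, sub_zero]
    exact Submodule.mem_iSup_of_mem 0 (by simp)
  | add a b ha hb =>
    rw [map_add, map_add, add_sub_add_comm]
    exact add_mem ha hb
  | mul a b ha hb =>
    have hab : a * b - algebraMap R _ (algebraMapInv (a * b)) =
        (a - algebraMap R _ (algebraMapInv a)) * b +
          algebraMapInv a • (b - algebraMap R _ (algebraMapInv b)) := by
      simp only [map_mul, Algebra.smul_def, sub_mul, mul_sub]
      abel
    rw [hab]
    refine add_mem (degreeFiltration_mul_le 1 0 (Submodule.mul_mem_mul ha ?_))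
      (Submodule.smul_mem _ _ hb)
    simp [degreeFiltration_zero]

lemma isNilpotent_sub_algebraMap_algebraMapInv [Module.Finite R M] (x : ExteriorAlgebra R M) :
    IsNilpotent (x - algebraMap R _ (algebraMapInv x)) := by
  obtain ⟨d, hd⟩ := exists_exteriorPower_eq_bot (R := R) (M := M)
  refine ⟨d, ?_⟩
  simpa [degreeFiltration_eq_bot hd] using
    pow_mem_degreeFiltration (sub_algebraMap_algebraMapInv_mem x) d

theorem isUnit_iff_isUnit_algebraMapInv [Module.Finite R M] (x : ExteriorAlgebra R M) :
    IsUnit x ↔ IsUnit (algebraMapInv x) := by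
  refine ⟨IsUnit.map algebraMapInv, fun hx => ?_⟩
  simpa using (isNilpotent_sub_algebraMap_algebraMapInv x).isUnit_add_right_of_commute
    ((isUnit_algebraMap M _).mpr hx) (Algebra.commute_algebraMap_left _ _).symm

end ExteriorAlgebra

/-- An element of the Grassmann algebra `Λₙ = ExteriorAlgebra K (Fin n → K)` over a field `K`
is a unit if and only if its augmentation (the image under the unique `K`-algebra homomorphism
killing all generators) is nonzero. -/
theorem grassmann_isUnit_iff (K : Type*) [Field K] (n : ℕ)
    (x : ExteriorAlgebra K (Fin n → K)) :
    IsUnit x ↔ ExteriorAlgebra.algebraMapInv x ≠ 0 :=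
  (ExteriorAlgebra.isUnit_iff_isUnit_algebraMapInv x).trans isUnit_iff_ne_zero
end
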